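/- arXiv:2403.12587 — 5 statements merged into one kernel-verified Lean document; each statement's English description precedes it below -/
import Mathlib

section
/- For every r-edge-colouring of the complete bipartite graph K_{n,m} (with n, m ≥ 1), the vertex set can be covered by at most 2r−1 monochromatic connected subgraphs (equivalently, monochromatic trees). (Proof idea: fix an edge vw and take the maximal monochromatic stars centred at v and at w; two of them merge via the edge vw.) -/
/-!
Let `vw` be an edge such that every vertex is adjacent to `v` or to `w`, as in `K_{n,m}`. The `2r`
monochromatic stars centred at `v` and at `w` cover all vertices, and the two stars in the colour of
`vw` meet at `w`, so they merge into a single monochromatic tree.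
-/

/-- A cover of the vertex set of `G` by `k` monochromatic connected subgraphs
(with respect to the edge-colouring `c` with `r` colours). -/
def MonoCover {V : Type*} (G : SimpleGraph V) {r : ℕ} (c : Sym2 V → Fin r) (k : ℕ) : Prop :=
  ∃ H : Fin k → G.Subgraph,
    (∀ i, (H i).Connected) ∧
    (∀ i, ∃ col : Fin r, ∀ e ∈ (H i).edgeSet, c e = col) ∧
    ∀ v, ∃ i, v ∈ (H i).verts

namespace SimpleGraph

variable {V α ι κ : Type*} {G : SimpleGraph V}

structure IsMonoCover (c : Sym2 V → α) (H : ι → G.Subgraph) : Prop where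
  connected : ∀ i, (H i).Connected
  monochromatic : ∀ i, ∃ k, ∀ e ∈ (H i).edgeSet, c e = k
  cover : ∀ v, ∃ i, v ∈ (H i).verts

namespace IsMonoCover

variable {c : Sym2 V → α} {H : ι → G.Subgraph}

theorem comp_surjective (hH : IsMonoCover c H) {f : κ → ι} (hf : f.Surjective) :
    IsMonoCover c (H ∘ f) where
  connected x := hH.connected (f x)
  monochromatic x := hH.monochromatic (f x)
  cover v := by
    obtain ⟨i, hi⟩ := hH.cover v
    obtain ⟨x, rfl⟩ := hf i
    exact ⟨x, hi⟩

theorem merge [DecidableEq ι] (hH : IsMonoCover c H) {i j : ι} (hij : i ≠ j) {k : α}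
    (hi : ∀ e ∈ (H i).edgeSet, c e = k) (hj : ∀ e ∈ (H j).edgeSet, c e = k)
    (hmeet : (H i ⊓ H j).verts.Nonempty) :
    IsMonoCover c fun x : {x // x ≠ j} => if x.1 = i then H i ⊔ H j else H x.1 where
  connected x := by
    split_ifs
    · exact Subgraph.connected_sup (hH.connected i).preconnected
        (hH.connected j).preconnected hmeet
    · exact hH.connected x.1
  monochromatic x := by
    split_ifs
    · exact ⟨k, fun e he => (Subgraph.edgeSet_sup ▸ he).elim (hi e) (hj e)⟩
    · exact hH.monochromatic x.1
  cover v := by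
    obtain ⟨y, hy⟩ := hH.cover v
    by_cases hyj : y = j
    · subst hyj
      exact ⟨⟨i, hij⟩, by simp [hy]⟩
    · refine ⟨⟨y, hyj⟩, ?_⟩
      split_ifs with hyi
      · exact Or.inl (hyi ▸ hy)
      · exact hy

end IsMonoCover

theorem monoCover_of_isMonoCover [Fintype ι] [Nonempty ι] {r k : ℕ} {c : Sym2 V → Fin r}
    {H : ι → G.Subgraph} (hH : IsMonoCover c H) (hk : Fintype.card ι ≤ k) : MonoCover G c k := by
  have hinj : (Fin.castLE hk ∘ Fintype.equivFin ι).Injective :=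
    (Fin.castLE_injective hk).comp (Fintype.equivFin ι).injective
  have hcover := hH.comp_surjective (Function.invFun_surjective hinj)
  exact ⟨_, hcover.connected, hcover.monochromatic, hcover.cover⟩

@[simps]
def monoStar (G : SimpleGraph V) (c : Sym2 V → α) (v : V) (k : α) : G.Subgraph where
  verts := insert v {u | G.Adj v u ∧ c s(v, u) = k}
  Adj a b := G.Adj a b ∧ c s(a, b) = k ∧ (a = v ∨ b = v)
  adj_sub h := h.1
  edge_vert := by
    rintro a b ⟨hab, hc, rfl | rfl⟩
    · exact Set.mem_insert _ _
    · exact Set.mem_insert_of_mem _ ⟨hab.symm, Sym2.eq_swap ▸ hc⟩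
  symm := ⟨fun _ _ ⟨hab, hc, hv⟩ => ⟨hab.symm, Sym2.eq_swap ▸ hc, hv.symm⟩⟩

variable {c : Sym2 V → α} {v : V} {k : α}

theorem center_mem_monoStar_verts : v ∈ (G.monoStar c v k).verts := by simp

theorem mem_monoStar_verts_of_adj {u : V} (h : G.Adj v u) :
    u ∈ (G.monoStar c v (c s(v, u))).verts := by
  simp [h]

theorem monoStar_connected : (G.monoStar c v k).Connected := by
  rw [Subgraph.connected_iff', connected_iff_exists_forall_reachable]
  refine ⟨⟨v, center_mem_monoStar_verts⟩, ?_⟩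
  rintro ⟨u, hu⟩
  simp only [monoStar_verts, Set.mem_insert_iff, Set.mem_ofPred_eq] at hu
  obtain rfl | ⟨hvu, hc⟩ := hu
  · rfl
  · exact Adj.reachable (by simp [hvu, hc])

theorem monoStar_monochromatic : ∀ e ∈ (G.monoStar c v k).edgeSet, c e = k := by
  rintro ⟨a, b⟩ h
  exact (Subgraph.mem_edgeSet.mp h).2.1

theorem monoCover_of_forall_adj_or_adj {r : ℕ} (c : Sym2 V → Fin r) {v w : V}
    (hdom : ∀ u, G.Adj v u ∨ G.Adj w u) : MonoCover G c (2 * r - 1) := by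
  classical
  have hwv : G.Adj w v := (hdom v).resolve_left G.irrefl
  let stars : Fin r ⊕ Fin r → G.Subgraph := Sum.elim (G.monoStar c v) (G.monoStar c w)
  have hstars : IsMonoCover c stars :=
    { connected := by rintro (_ | _) <;> exact monoStar_connected
      monochromatic := by rintro (k | k) <;> exact ⟨k, monoStar_monochromatic⟩
      cover := fun u => (hdom u).elim (fun h => ⟨.inl _, mem_monoStar_verts_of_adj h⟩)
        fun h => ⟨.inr _, mem_monoStar_verts_of_adj h⟩ }
  set k := c s(v, w)
  have hmeet : (stars (.inl k) ⊓ stars (.inr k)).verts.Nonempty :=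
    ⟨w, mem_monoStar_verts_of_adj hwv.symm, center_mem_monoStar_verts⟩
  have hmerged := hstars.merge Sum.inl_ne_inr monoStar_monochromatic monoStar_monochromatic hmeet
  have : Nonempty {x // x ≠ Sum.inr k} := ⟨⟨.inl k, Sum.inl_ne_inr⟩⟩
  refine monoCover_of_isMonoCover hmerged ?_
  rw [Fintype.card_subtype_compl, Fintype.card_sum, Fintype.card_fin, Fintype.card_unique]
  omega

end SimpleGraph

theorem cover_completeBipartite_general (n m r : ℕ) (hn : 1 ≤ n) (hm : 1 ≤ m)
    (c : Sym2 (Fin n ⊕ Fin m) → Fin r) :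
    MonoCover (completeBipartiteGraph (Fin n) (Fin m)) c (2 * r - 1) := by
  refine SimpleGraph.monoCover_of_forall_adj_or_adj c (v := .inl ⟨0, hn⟩) (w := .inr ⟨0, hm⟩) ?_
  rintro (a | b) <;> simp

/-- Every `r`-edge-colouring of `K_{n,m}` admits a cover of the vertex set by at most
`2r - 1` monochromatic connected subgraphs. -/
theorem cover_completeBipartite (n m r : ℕ) (hn : 1 ≤ n) (hm : 1 ≤ m) (hr : 1 ≤ r)
    (c : Sym2 (Fin n ⊕ Fin m) → Fin r) :
    MonoCover (completeBipartiteGraph (Fin n) (Fin m)) c (2 * r - 1) :=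
  cover_completeBipartite_general n m r hn hm c
end

section
/- Let G be a bipartite graph with parts V₁, V₂, each of size n, suppose r ∈ V₁ and b ∈ V₂ are non-adjacent, and suppose every vertex of G has at least two non-neighbours in the opposite part. Define X = V₁ \ (N(b) ∪ {r}) and Y = V₂ \ (N(r) ∪ {b}) (both non-empty). Colour red: all edges from r to N(r), all edges between X and N(r), and all edges between Y and N(b); colour blue: all edges from b to N(b), all edges between N(r) and N(b), and all edges between X and Y. Then in this 2-colouring, no two monochromatic components cover all of V(G); in particular tc₂(G) ≥ 3. -/
open Finset

namespace SimpleGraph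

variable {V : Type*} {G : SimpleGraph V} {k : ℕ} {c : Sym2 V → Fin k} {col : Fin k} {u v : V}

theorem Reachable.mem_of_adj_closed {S : Set V} (hS : ∀ x y, G.Adj x y → x ∈ S → y ∈ S)
    (h : G.Reachable u v) (hu : u ∈ S) : v ∈ S := by
  rw [reachable_iff_reflTransGen] at h
  induction h with
  | refl => exact hu
  | tail _ hxy ih => exact hS _ _ hxy ih

def colourClass (G : SimpleGraph V) (c : Sym2 V → Fin k) (col : Fin k) : SimpleGraph V :=
  fromEdgeSet {e ∈ G.edgeSet | c e = col}

@[simp]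
theorem colourClass_adj : (G.colourClass c col).Adj u v ↔ G.Adj u v ∧ c s(u, v) = col := by
  simp only [colourClass, fromEdgeSet_adj, Set.mem_ofPred_eq, mem_edgeSet]
  exact ⟨fun h => h.1, fun h => ⟨h, h.1.ne⟩⟩

theorem Subgraph.Connected.reachable_colourClass {H : G.Subgraph} (hH : H.Connected)
    (hcol : ∀ e ∈ H.edgeSet, c e = col) (hu : u ∈ H.verts) (hv : v ∈ H.verts) :
    (G.colourClass c col).Reachable u v :=
  (hH ⟨u, hu⟩ ⟨v, hv⟩).map ⟨Subtype.val, fun {x y} (h : H.Adj x y) =>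
    colourClass_adj.2 ⟨h.adj_sub, hcol _ (Subgraph.mem_edgeSet.2 h)⟩⟩

def ColourSeparated (G : SimpleGraph V) (c : Sym2 V → Fin k) (u v : V) : Prop :=
  ∀ col, ¬ (G.colourClass c col).Reachable u v

instance : Std.Symm (G.ColourSeparated c) :=
  ⟨fun _ _ h col huv => h col huv.symm⟩

end SimpleGraph

open SimpleGraph

theorem not_monoCover_of_pairwise_colourSeparated {V : Type*} {G : SimpleGraph V} {k : ℕ}
    (c : Sym2 V → Fin k) (P : Finset V) (hP : k < #P)
    (hsep : (P : Set V).Pairwise (G.ColourSeparated c)) :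
    ¬ MonoCover G c k := by
  rintro ⟨H, hconn, hmono, hcov⟩
  choose idx hidx using hcov
  obtain ⟨u, hu, v, hv, huv, hidx_eq⟩ :=
    exists_ne_map_eq_of_card_lt_of_maps_to (t := univ) (by simpa using hP)
      (fun _ _ => mem_univ (idx _))
  obtain ⟨col, hcol⟩ := hmono (idx u)
  exact hsep hu hv huv col ((hconn _).reachable_colourClass hcol (hidx u) (hidx_eq ▸ hidx v))

theorem Finset.mem_sdiff_insert_filter {V : Type*} [DecidableEq V] {s : Finset V} {a x : V}
    {p : V → Prop} [DecidablePred p] : x ∈ s \ insert a (s.filter p) ↔ x ∈ s ∧ x ≠ a ∧ ¬ p x := by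
  simp only [mem_sdiff, mem_insert, mem_filter]
  tauto

section Construction

variable {V : Type*} {G : SimpleGraph V} {V₁ V₂ X Y : Set V} {r b : V} {c : Sym2 V → Fin 2}

def IsRedPair (G : SimpleGraph V) (r b : V) (X Y : Set V) (x y : V) : Prop :=
  ((x = r ∨ x ∈ X) ∧ G.Adj r y) ∨ ((y = r ∨ y ∈ X) ∧ G.Adj r x) ∨
    (G.Adj b x ∧ y ∈ Y) ∨ (G.Adj b y ∧ x ∈ Y)

theorem red_adj_preserves_A (hG : G.IsBipartiteWith V₁ V₂) (hr : r ∈ V₁) (hb : b ∈ V₂)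
    (hrb : ¬ G.Adj r b) (hX : ∀ x, x ∈ X ↔ x ∈ V₁ ∧ x ≠ r ∧ ¬ G.Adj b x)
    (hY : ∀ y, y ∈ Y ↔ y ∈ V₂ ∧ y ≠ b ∧ ¬ G.Adj r y)
    (hc : ∀ x y, G.Adj x y → (c s(x, y) = 0 ↔ IsRedPair G r b X Y x y))
    {x y : V} (hxy : (G.colourClass c 0).Adj x y) (hx : x = r ∨ x ∈ X ∨ G.Adj r x) :
    y = r ∨ y ∈ X ∨ G.Adj r y := by
  obtain ⟨hadj, hred⟩ := colourClass_adj.1 hxy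
  have hV : ∀ v ∈ V₁, v ∉ V₂ := fun _ h => Set.disjoint_left.1 hG.disjoint h
  rcases (hc x y hadj).1 hred with ⟨-, hry⟩ | ⟨hy, -⟩ | ⟨hbx, -⟩ | ⟨-, hxY⟩
  · exact .inr (.inr hry)
  · exact hy.imp_right .inl
  · rcases hx with rfl | hxX | hrx
    · exact absurd hbx.symm hrb
    · exact absurd hbx ((hX x).1 hxX).2.2
    · exact absurd (hG.mem_of_mem_adj hr hrx) (hV x (hG.symm.mem_of_mem_adj hb hbx))
  · obtain ⟨hx₂, -, hrx⟩ := (hY x).1 hxY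
    rcases hx with rfl | hxX | hrx'
    · exact absurd hx₂ (hV x hr)
    · exact absurd hx₂ (hV x ((hX x).1 hxX).1)
    · exact absurd hrx' hrx

theorem not_red_adj_b (hG : G.IsBipartiteWith V₁ V₂) (hr : r ∈ V₁) (hb : b ∈ V₂)
    (hrb : ¬ G.Adj r b) (hX : ∀ x, x ∈ X ↔ x ∈ V₁ ∧ x ≠ r ∧ ¬ G.Adj b x)
    (hY : ∀ y, y ∈ Y ↔ y ∈ V₂ ∧ y ≠ b ∧ ¬ G.Adj r y)
    (hc : ∀ x y, G.Adj x y → (c s(x, y) = 0 ↔ IsRedPair G r b X Y x y)) (y : V) :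
    ¬ (G.colourClass c 0).Adj b y := by
  rintro hby
  obtain ⟨hadj, hred⟩ := colourClass_adj.1 hby
  have hb₁ : b ∉ V₁ := Set.disjoint_right.1 hG.disjoint hb
  rcases (hc b y hadj).1 hred with ⟨rfl | hbX, -⟩ | ⟨-, hrb'⟩ | ⟨hbb, -⟩ | ⟨-, hbY⟩
  · exact hb₁ hr
  · exact hb₁ ((hX b).1 hbX).1
  · exact hrb hrb'
  · exact hbb.ne rfl
  · exact ((hY b).1 hbY).2.1 rfl

theorem not_blue_adj_r (hc : ∀ x y, G.Adj x y → (c s(x, y) = 0 ↔ IsRedPair G r b X Y x y))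
    (y : V) : ¬ (G.colourClass c 1).Adj r y := by
  rintro hry
  obtain ⟨hadj, hblue⟩ := colourClass_adj.1 hry
  exact absurd ((hc r y hadj).2 (.inl ⟨.inl rfl, hadj⟩)) (by simp [hblue])

theorem blue_adj_preserves_XY (hG : G.IsBipartiteWith V₁ V₂)
    (hX : ∀ x, x ∈ X ↔ x ∈ V₁ ∧ x ≠ r ∧ ¬ G.Adj b x)
    (hY : ∀ y, y ∈ Y ↔ y ∈ V₂ ∧ y ≠ b ∧ ¬ G.Adj r y)
    (hc : ∀ x y, G.Adj x y → (c s(x, y) = 0 ↔ IsRedPair G r b X Y x y))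
    {x y : V} (hxy : (G.colourClass c 1).Adj x y) (hx : x ∈ X ∨ x ∈ Y) : y ∈ X ∨ y ∈ Y := by
  obtain ⟨hadj, hblue⟩ := colourClass_adj.1 hxy
  have hnred : ¬ IsRedPair G r b X Y x y := fun h => by simp [(hc x y hadj).2 h] at hblue
  rcases hx with hxX | hxY
  · obtain ⟨hx₁, -, hbx⟩ := (hX x).1 hxX
    refine .inr ((hY y).2 ⟨hG.mem_of_mem_adj hx₁ hadj, ?_, fun hry => hnred (.inl ⟨.inr hxX, hry⟩)⟩)
    rintro rfl
    exact hbx hadj.symm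
  · obtain ⟨hx₂, -, hrx⟩ := (hY x).1 hxY
    refine .inl ((hX y).2 ⟨hG.symm.mem_of_mem_adj hx₂ hadj, ?_,
      fun hby => hnred (.inr (.inr (.inr ⟨hby, hxY⟩)))⟩)
    rintro rfl
    exact hrx hadj.symm

theorem pairwise_colourSeparated (hG : G.IsBipartiteWith V₁ V₂) (hr : r ∈ V₁) (hb : b ∈ V₂)
    (hrb : ¬ G.Adj r b) (hX : ∀ x, x ∈ X ↔ x ∈ V₁ ∧ x ≠ r ∧ ¬ G.Adj b x)
    (hY : ∀ y, y ∈ Y ↔ y ∈ V₂ ∧ y ≠ b ∧ ¬ G.Adj r y)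
    (hc : ∀ x y, G.Adj x y → (c s(x, y) = 0 ↔ IsRedPair G r b X Y x y)) {y : V} (hy : y ∈ Y) :
    ({r, b, y} : Set V).Pairwise (G.ColourSeparated c) := by
  have hV₂ : ∀ v ∈ V₂, v ∉ V₁ := fun _ h => Set.disjoint_right.1 hG.disjoint h
  obtain ⟨hy₂, hyb, hry⟩ := (hY y).1 hy
  rw [Set.pairwise_insert_of_symm, Set.pairwise_pair_of_symm]
  refine ⟨fun _ => ?_, fun v hv hrv => ?_⟩
  · rw [ColourSeparated, Fin.forall_fin_two]
    refine ⟨fun h => hyb (h.mem_of_adj_closed (S := {b}) ?_ rfl), fun h => ?_⟩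
    · rintro x z hxz rfl
      exact (not_red_adj_b hG hr hb hrb hX hY hc z hxz).elim
    · rcases h.symm.mem_of_adj_closed (fun _ _ => blue_adj_preserves_XY hG hX hY hc) (.inr hy)
        with hbX | hbY
      · exact hV₂ b hb ((hX b).1 hbX).1
      · exact ((hY b).1 hbY).2.1 rfl
  · obtain ⟨hv₂, hrv'⟩ : v ∈ V₂ ∧ ¬ G.Adj r v := by
      rcases hv with rfl | rfl
      exacts [⟨hb, hrb⟩, ⟨hy₂, hry⟩]
    rw [ColourSeparated, Fin.forall_fin_two]
    refine ⟨fun h => ?_, fun h => hrv (h.mem_of_adj_closed (S := {r}) ?_ rfl).symm⟩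
    · rcases h.mem_of_adj_closed (fun _ _ => red_adj_preserves_A hG hr hb hrb hX hY hc)
        (.inl rfl) with hvr | hvX | hrv''
      · exact hrv hvr.symm
      · exact hV₂ v hv₂ ((hX v).1 hvX).1
      · exact hrv' hrv''
    · rintro x z hxz rfl
      exact (not_blue_adj_r hc z hxz).elim

end Construction

theorem no_two_component_cover_general {V : Type*} [DecidableEq V]
    (G : SimpleGraph V) [DecidableRel G.Adj]
    (V₁ V₂ : Finset V)
    (hdisj : Disjoint V₁ V₂)
    (hbip : ∀ x y, G.Adj x y → (x ∈ V₁ ∧ y ∈ V₂) ∨ (x ∈ V₂ ∧ y ∈ V₁))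
    (r b : V) (hr : r ∈ V₁) (hb : b ∈ V₂) (hrb : ¬ G.Adj r b)
    (hnon₁ : ∀ v ∈ V₁, 2 ≤ (V₂.filter (fun w => ¬ G.Adj v w)).card)
    (X Y : Finset V)
    (hX : X = V₁ \ insert r (V₁.filter (fun x => G.Adj b x)))
    (hY : Y = V₂ \ insert b (V₂.filter (fun y => G.Adj r y)))
    (c : Sym2 V → Fin 2)
    (hc : ∀ x y, G.Adj x y → (c s(x, y) = 0 ↔
      ((x = r ∨ x ∈ X) ∧ G.Adj r y) ∨ ((y = r ∨ y ∈ X) ∧ G.Adj r x) ∨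
      (G.Adj b x ∧ y ∈ Y) ∨ (G.Adj b y ∧ x ∈ Y))) :
    ¬ MonoCover G c 2 := by
  have hG : G.IsBipartiteWith V₁ V₂ := ⟨disjoint_coe.2 hdisj, hbip⟩
  have hXmem : ∀ x, x ∈ X ↔ x ∈ V₁ ∧ x ≠ r ∧ ¬ G.Adj b x := fun _ => hX ▸ mem_sdiff_insert_filter
  have hYmem : ∀ y, y ∈ Y ↔ y ∈ V₂ ∧ y ≠ b ∧ ¬ G.Adj r y := fun _ => hY ▸ mem_sdiff_insert_filter
  obtain ⟨y, hy, hyb⟩ := exists_mem_ne (hnon₁ r hr) b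
  have hyY : y ∈ Y := (hYmem y).2 ⟨(mem_filter.1 hy).1, hyb, (mem_filter.1 hy).2⟩
  have hV₂ : ∀ v ∈ V₂, r ≠ v := fun v hv hrv => disjoint_left.1 hdisj hr (hrv ▸ hv)
  have hcard : #{r, b, y} = 3 :=
    card_eq_three.2 ⟨r, b, y, hV₂ b hb, hV₂ y (mem_filter.1 hy).1, hyb.symm, rfl⟩
  refine not_monoCover_of_pairwise_colourSeparated c {r, b, y} (by omega) ?_
  push_cast
  exact pairwise_colourSeparated hG hr hb hrb hXmem hYmem hc hyY

/-- The colouring of a bipartite graph `G` (with parts of size `n`) built from a non-edge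
`rb`: red edges are those between `{r} ∪ X` and `N(r)` and those between `N(b)` and `Y`,
all remaining edges being blue, where `X = V₁ \ (N(b) ∪ {r})` and `Y = V₂ \ (N(r) ∪ {b})`.
In this colouring no two monochromatic components cover all of `V(G)`; in particular
`tc₂(G) ≥ 3`. -/
theorem no_two_component_cover {V : Type*} [Fintype V] [DecidableEq V]
    (G : SimpleGraph V) [DecidableRel G.Adj]
    (V₁ V₂ : Finset V) (n : ℕ)
    (hpart : V₁ ∪ V₂ = Finset.univ) (hdisj : Disjoint V₁ V₂)
    (hV₁ : V₁.card = n) (hV₂ : V₂.card = n)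
    (hbip : ∀ x y, G.Adj x y → (x ∈ V₁ ∧ y ∈ V₂) ∨ (x ∈ V₂ ∧ y ∈ V₁))
    (r b : V) (hr : r ∈ V₁) (hb : b ∈ V₂) (hrb : ¬ G.Adj r b)
    (hnon₁ : ∀ v ∈ V₁, 2 ≤ (V₂.filter (fun w => ¬ G.Adj v w)).card)
    (hnon₂ : ∀ v ∈ V₂, 2 ≤ (V₁.filter (fun w => ¬ G.Adj v w)).card)
    (X Y : Finset V)
    (hX : X = V₁ \ insert r (V₁.filter (fun x => G.Adj b x)))
    (hY : Y = V₂ \ insert b (V₂.filter (fun y => G.Adj r y)))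
    (c : Sym2 V → Fin 2)
    (hc : ∀ x y, G.Adj x y → (c s(x, y) = 0 ↔
      ((x = r ∨ x ∈ X) ∧ G.Adj r y) ∨ ((y = r ∨ y ∈ X) ∧ G.Adj r x) ∨
      (G.Adj b x ∧ y ∈ Y) ∨ (G.Adj b y ∧ x ∈ Y))) :
    ¬ MonoCover G c 2 :=
  no_two_component_cover_general G V₁ V₂ hdisj hbip r b hr hb hrb hnon₁ X Y hX hY c hc
end

section
/- Let G be a bipartite graph with parts V₁, V₂ and suppose there exist vertices u₁, v₁ ∈ V₁ with no common neighbour, and u₂, v₂ ∈ V₂ \ (N(u₁) ∪ N(v₁)) with no common neighbour. Colour red every edge incident to one of u₁, v₁, u₂, v₂, and blue all remaining edges. Then u₁, v₁, u₂, v₂ lie in four pairwise distinct red components and none of them lies in any blue component, so every cover of V(G) by monochromatic components uses at least four components; hence tc₂(G) ≥ 4. -/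
namespace SimpleGraph

variable {V : Type*} {G : SimpleGraph V}

def closedNeighborSet (G : SimpleGraph V) (v : V) : Set V :=
  insert v (G.neighborSet v)

theorem self_mem_closedNeighborSet (v : V) : v ∈ G.closedNeighborSet v :=
  Set.mem_insert v _

theorem mem_closedNeighborSet_of_adj {v w : V} (h : G.Adj v w) : w ∈ G.closedNeighborSet v :=
  Set.mem_insert_of_mem v h

theorem disjoint_closedNeighborSet {v w : V} (hne : v ≠ w) (hadj : ¬G.Adj v w)
    (hN : Disjoint (G.neighborSet v) (G.neighborSet w)) :
    Disjoint (G.closedNeighborSet v) (G.closedNeighborSet w) := by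
  simp only [closedNeighborSet, Set.disjoint_insert_left, Set.disjoint_insert_right,
    mem_neighborSet, Set.mem_insert_iff]
  exact ⟨by rintro (h | h) <;> [exact hne h.symm; exact hadj h], fun h => hadj h.symm, hN⟩

theorem IsBipartiteWith.not_adj {s t : Set V} (h : G.IsBipartiteWith s t) {v w : V}
    (hv : v ∈ s) (hw : w ∈ s) : ¬G.Adj v w :=
  fun hadj => h.disjoint.notMem_of_mem_left hw (h.mem_of_mem_adj hv hadj)

theorem IsBipartiteWith.disjoint_neighborSet {s t : Set V} (h : G.IsBipartiteWith s t) {v w : V}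
    (hv : v ∈ s) (hw : w ∈ t) : Disjoint (G.neighborSet v) (G.neighborSet w) :=
  Set.disjoint_of_subset (isBipartiteWith_neighborSet_subset h hv)
    (isBipartiteWith_neighborSet_subset' h hw) h.disjoint.symm

theorem IsBipartiteWith.disjoint_closedNeighborSet_of_not_adj {s t : Set V}
    (h : G.IsBipartiteWith s t) {v w : V} (hv : v ∈ s) (hw : w ∈ t) (hadj : ¬G.Adj v w) :
    Disjoint (G.closedNeighborSet v) (G.closedNeighborSet w) :=
  disjoint_closedNeighborSet (h.disjoint.ne_of_mem hv hw) hadj (h.disjoint_neighborSet hv hw)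

theorem IsBipartiteWith.disjoint_closedNeighborSet_of_disjoint_neighborSet {s t : Set V}
    (h : G.IsBipartiteWith s t) {v w : V} (hv : v ∈ s) (hw : w ∈ s) (hne : v ≠ w)
    (hN : Disjoint (G.neighborSet v) (G.neighborSet w)) :
    Disjoint (G.closedNeighborSet v) (G.closedNeighborSet w) :=
  disjoint_closedNeighborSet hne (h.not_adj hv hw) hN

theorem Subgraph.Connected.verts_subset_of_adj_closed {H : G.Subgraph} (hH : H.Connected)
    {A : Set V} (hA : ∀ x y, x ∈ A → H.Adj x y → y ∈ A) {x : V} (hx : x ∈ H.verts)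
    (hxA : x ∈ A) : H.verts ⊆ A := by
  intro y hy
  obtain ⟨p⟩ := hH.preconnected ⟨x, hx⟩ ⟨y, hy⟩
  suffices ∀ {a b : H.verts}, H.coe.Walk a b → (a : V) ∈ A → (b : V) ∈ A from this p hxA
  intro a b p
  induction p with
  | nil => exact id
  | cons hab _ ih => exact fun ha => ih (hA _ _ ha hab)

section Colouring

variable {S : Set V} (hS : S.PairwiseDisjoint G.closedNeighborSet)
  {α : Type*} {c : Sym2 V → α} {red : α}
include hS

theorem mem_closedNeighborSet_of_red_adj
    (hred : ∀ x y, G.Adj x y → c s(x, y) = red → x ∈ S ∨ y ∈ S)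
    {s x y : V} (hs : s ∈ S) (hx : x ∈ G.closedNeighborSet s) (hxy : G.Adj x y)
    (hxy_red : c s(x, y) = red) : y ∈ G.closedNeighborSet s := by
  rcases hred x y hxy hxy_red with hxS | hyS
  · obtain rfl : x = s := hS.elim_set hxS hs x (self_mem_closedNeighborSet x) hx
    exact mem_closedNeighborSet_of_adj hxy
  · obtain rfl : y = s :=
      hS.elim_set hyS hs x (mem_closedNeighborSet_of_adj hxy.symm) hx
    exact self_mem_closedNeighborSet y

theorem eq_of_mem_monochromatic_connected
    (hc : ∀ x y, G.Adj x y → (c s(x, y) = red ↔ x ∈ S ∨ y ∈ S))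
    {H : G.Subgraph} (hH : H.Connected) {col : α} (hcol : ∀ e ∈ H.edgeSet, c e = col)
    {s t : V} (hs : s ∈ S) (ht : t ∈ S) (hsH : s ∈ H.verts) (htH : t ∈ H.verts) : s = t := by
  by_contra hst
  -- otherwise `{s}` would be closed under `H.Adj` and contain `t`
  obtain ⟨x, hsx⟩ : ∃ x, H.Adj s x := by
    by_contra! hno
    exact hst (hH.verts_subset_of_adj_closed (A := {s})
      (by rintro _ y rfl h; exact absurd h (hno y)) hsH rfl htH).symm
  have hcol_red : col = red :=
    (hcol _ (Subgraph.mem_edgeSet.2 hsx)).symm.trans ((hc s x hsx.adj_sub).2 (Or.inl hs))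
  have htN : t ∈ G.closedNeighborSet s :=
    hH.verts_subset_of_adj_closed
      (fun x y hx hxy => mem_closedNeighborSet_of_red_adj hS (fun x y h => (hc x y h).1) hs hx
        hxy.adj_sub ((hcol _ (Subgraph.mem_edgeSet.2 hxy)).trans hcol_red))
      hsH (self_mem_closedNeighborSet s) htH
  exact hst (hS.elim_set hs ht t htN (self_mem_closedNeighborSet t))

end Colouring

end SimpleGraph

theorem MonoCover.encard_le {V : Type*} {G : SimpleGraph V} {S : Set V} {r k : ℕ}
    {c : Sym2 V → Fin r} {red : Fin r}
    (hS : S.PairwiseDisjoint G.closedNeighborSet)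
    (hc : ∀ x y, G.Adj x y → (c s(x, y) = red ↔ x ∈ S ∨ y ∈ S)) (h : MonoCover G c k) :
    S.encard ≤ k := by
  obtain ⟨H, hconn, hcol, hcov⟩ := h
  choose idx hidx using hcov
  have hinj : Set.InjOn idx S := by
    intro s hs t ht hst
    obtain ⟨col, hcol⟩ := hcol (idx s)
    exact SimpleGraph.eq_of_mem_monochromatic_connected hS hc (hconn _) hcol hs ht (hidx s)
      (hst ▸ hidx t)
  calc S.encard ≤ (Set.univ : Set (Fin k)).encard :=
        Set.encard_le_encard_of_injOn (Set.mapsTo_univ _ _) hinj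
    _ = k := by simp

theorem no_three_component_cover_general {V : Type*}
    (G : SimpleGraph V) (V₁ V₂ : Set V)
    (hdisj : Disjoint V₁ V₂)
    (hbip : ∀ x y, G.Adj x y → (x ∈ V₁ ∧ y ∈ V₂) ∨ (x ∈ V₂ ∧ y ∈ V₁))
    (u₁ v₁ : V) (hu₁ : u₁ ∈ V₁) (hv₁ : v₁ ∈ V₁) (hne₁ : u₁ ≠ v₁)
    (hcn₁ : ∀ w, ¬ (G.Adj u₁ w ∧ G.Adj v₁ w))
    (u₂ v₂ : V) (hu₂ : u₂ ∈ V₂) (hv₂ : v₂ ∈ V₂) (hne₂ : u₂ ≠ v₂)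
    (hu₂n : ¬ G.Adj u₁ u₂ ∧ ¬ G.Adj v₁ u₂)
    (hv₂n : ¬ G.Adj u₁ v₂ ∧ ¬ G.Adj v₁ v₂)
    (hcn₂ : ∀ w, ¬ (G.Adj u₂ w ∧ G.Adj v₂ w))
    (c : Sym2 V → Fin 2)
    (hc : ∀ x y, G.Adj x y → (c s(x, y) = 0 ↔
      x ∈ ({u₁, v₁, u₂, v₂} : Set V) ∨ y ∈ ({u₁, v₁, u₂, v₂} : Set V))) :
    ¬ MonoCover G c 3 := by
  intro hcover
  have hB : G.IsBipartiteWith V₁ V₂ := ⟨hdisj, hbip⟩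
  have hS : ({u₁, v₁, u₂, v₂} : Set V).PairwiseDisjoint G.closedNeighborSet := by
    simp only [Set.pairwiseDisjoint_insert, Set.pairwiseDisjoint_singleton, Set.mem_insert_iff,
      Set.mem_singleton_iff, forall_eq_or_imp, forall_eq, true_and]
    refine ⟨⟨fun _ => ?_, fun _ => ?_, fun _ => ?_⟩, fun _ => ?_, fun _ => ?_, fun _ => ?_⟩
    · exact hB.symm.disjoint_closedNeighborSet_of_disjoint_neighborSet hu₂ hv₂ hne₂
        (Set.disjoint_left.2 fun w h₁ h₂ => hcn₂ w ⟨h₁, h₂⟩)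
    · exact hB.disjoint_closedNeighborSet_of_not_adj hv₁ hu₂ hu₂n.2
    · exact hB.disjoint_closedNeighborSet_of_not_adj hv₁ hv₂ hv₂n.2
    · exact hB.disjoint_closedNeighborSet_of_disjoint_neighborSet hu₁ hv₁ hne₁
        (Set.disjoint_left.2 fun w h₁ h₂ => hcn₁ w ⟨h₁, h₂⟩)
    · exact hB.disjoint_closedNeighborSet_of_not_adj hu₁ hu₂ hu₂n.1
    · exact hB.disjoint_closedNeighborSet_of_not_adj hu₁ hv₂ hv₂n.1
  have hcard : ({u₁, v₁, u₂, v₂} : Set V).encard = 4 := by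
    rw [Set.encard_insert_of_notMem, Set.encard_insert_of_notMem, Set.encard_pair hne₂]
    · rfl
    · simp [hdisj.ne_of_mem hv₁ hu₂, hdisj.ne_of_mem hv₁ hv₂]
    · simp [hne₁, hdisj.ne_of_mem hu₁ hu₂, hdisj.ne_of_mem hu₁ hv₂]
  have h4le3 := hcover.encard_le hS hc
  rw [hcard] at h4le3
  exact absurd h4le3 (by decide)

/-- If `u₁, v₁ ∈ V₁` have no common neighbour, `u₂, v₂ ∈ V₂ \ (N(u₁) ∪ N(v₁))` have no
common neighbour, and all edges incident to one of these four vertices are coloured red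
while all other edges are blue, then `V(G)` cannot be covered by three monochromatic
components; hence `tc₂(G) ≥ 4`. -/
theorem no_three_component_cover {V : Type*}
    (G : SimpleGraph V) (V₁ V₂ : Set V)
    (hpart : V₁ ∪ V₂ = Set.univ) (hdisj : Disjoint V₁ V₂)
    (hbip : ∀ x y, G.Adj x y → (x ∈ V₁ ∧ y ∈ V₂) ∨ (x ∈ V₂ ∧ y ∈ V₁))
    (u₁ v₁ : V) (hu₁ : u₁ ∈ V₁) (hv₁ : v₁ ∈ V₁) (hne₁ : u₁ ≠ v₁)
    (hcn₁ : ∀ w, ¬ (G.Adj u₁ w ∧ G.Adj v₁ w))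
    (u₂ v₂ : V) (hu₂ : u₂ ∈ V₂) (hv₂ : v₂ ∈ V₂) (hne₂ : u₂ ≠ v₂)
    (hu₂n : ¬ G.Adj u₁ u₂ ∧ ¬ G.Adj v₁ u₂)
    (hv₂n : ¬ G.Adj u₁ v₂ ∧ ¬ G.Adj v₁ v₂)
    (hcn₂ : ∀ w, ¬ (G.Adj u₂ w ∧ G.Adj v₂ w))
    (c : Sym2 V → Fin 2)
    (hc : ∀ x y, G.Adj x y → (c s(x, y) = 0 ↔
      x ∈ ({u₁, v₁, u₂, v₂} : Set V) ∨ y ∈ ({u₁, v₁, u₂, v₂} : Set V))) :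
    ¬ MonoCover G c 3 :=
  no_three_component_cover_general G V₁ V₂ hdisj hbip u₁ v₁ hu₁ hv₁ hne₁ hcn₁ u₂ v₂ hu₂ hv₂ hne₂
    hu₂n hv₂n hcn₂ c hc
end

section
/- Let 0 < ε < 1 and p ∈ (0,1), and let G be a bipartite graph with parts V₁, V₂ of size n such that for all sets A ⊆ V₁ and B ⊆ V₂ with |A|, |B| ≥ pn/2, one has e(A,B) ≤ p|A||B| + δpn|A| and e(A,B) ≤ p|A||B| + δpn|B|, where 0 < δ and δ is sufficiently small compared to ε (say δ ≤ ε/4). Then every spanning subgraph H ⊆ G with minimum degree δ(H) ≥ (1/2 + ε)pn is connected. -/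
/-!
Let `X ∪ Y` be the vertex set of a component of `H`, with `X ⊆ V₁` and `Y ⊆ V₂`. The minimum
degree is positive, so some edge of `H` lies in the component and both `X` and `Y` are nonempty;
as all `H`-neighbours of a vertex of the component stay in it, `|X|, |Y| ≥ (1/2 + ε)pn ≥ pn/2`.
Counting the edges between `X` and `Y` from the side of `Y` and comparing with the regularity
bound gives `(1/2 + ε)pn|Y| ≤ e(X, Y) ≤ p|X||Y| + δpn|Y|`, hence `|X| ≥ (1/2 + ε - δ)n > n/2`.
Two components therefore meet inside `V₁`, so there is only one.
-/

open Finset SimpleGraph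

theorem Rel.card_interedges_eq_sum_card_bipartiteBelow {α β : Type*} (r : α → β → Prop)
    [∀ a b, Decidable (r a b)] (s : Finset α) (t : Finset β) :
    #(Rel.interedges r s t) = ∑ b ∈ t, #(s.bipartiteBelow r b) := by
  simp only [Rel.interedges, bipartiteBelow, card_filter, sum_product_right]

theorem Rel.le_of_card_interedges_le_mul {α β R : Type*} [Field R] [LinearOrder R]
    [IsStrictOrderedRing R] {r : α → β → Prop} [∀ a b, Decidable (r a b)] {s : Finset α}
    {t : Finset β} (ht : t.Nonempty) {d m : R}
    (hd : ∀ b ∈ t, d ≤ #(s.bipartiteBelow r b)) (he : #(Rel.interedges r s t) ≤ m * #t) :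
    d ≤ m := by
  have hlow : d * #t ≤ #(Rel.interedges r s t) := by
    rw [Rel.card_interedges_eq_sum_card_bipartiteBelow, mul_comm, ← nsmul_eq_mul]
    push_cast
    exact card_nsmul_le_sum _ _ _ hd
  exact le_of_mul_le_mul_right (hlow.trans he) (by exact_mod_cast ht.card_pos)

namespace SimpleGraph

variable {V : Type*} {G H : SimpleGraph V}

theorem IsBipartiteWith.mono {s t : Set V} (hG : G.IsBipartiteWith s t) (hHG : H ≤ G) :
    H.IsBipartiteWith s t :=
  ⟨hG.disjoint, fun _ _ h ↦ hG.mem_of_adj (hHG h)⟩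

theorem ncard_neighborSet_le_card_bipartiteBelow [DecidableRel G.Adj] (hHG : H ≤ G)
    {X : Finset V} {w : V} (hX : H.neighborSet w ⊆ X) :
    (H.neighborSet w).ncard ≤ #(X.bipartiteBelow G.Adj w) := by
  rw [← Set.ncard_coe_finset]
  refine Set.ncard_le_ncard (fun v hv ↦ ?_) (finite_toSet _)
  simpa using ⟨hX hv, (hHG hv).symm⟩

theorem IsBipartiteWith.neighborSet_subset_filter_reachable {S T : Finset V} {u w : V}
    [DecidablePred (H.Reachable u)] (hH : H.IsBipartiteWith S T) (hw : w ∈ T)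
    (hu : H.Reachable u w) : H.neighborSet w ⊆ ↑(S.filter (H.Reachable u)) := fun v hv ↦ by
  simpa using ⟨hH.mem_of_mem_adj' hw hv.symm, hu.trans hv.reachable⟩

theorem IsBipartiteWith.exists_reachable_of_adj {S T : Set V} {u v : V}
    (hH : H.IsBipartiteWith S T) (huv : H.Adj u v) :
    (∃ x ∈ S, H.Reachable u x) ∧ ∃ y ∈ T, H.Reachable u y := by
  rcases hH.mem_of_adj huv with ⟨hu, hv⟩ | ⟨hu, hv⟩
  · exact ⟨⟨u, hu, .refl u⟩, ⟨v, hv, huv.reachable⟩⟩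
  · exact ⟨⟨v, hv, huv.reachable⟩, ⟨u, hu, .refl u⟩⟩

theorem half_lt_card_filter_reachable [DecidableRel G.Adj] {V₁ V₂ : Finset V} {N p ε δ : ℝ}
    (hHG : H ≤ G) (hG : G.IsBipartiteWith V₁ V₂) (hN : 0 < N) (hp : 0 < p) (hε : 0 < ε)
    (hδε : δ < ε)
    (hreg : ∀ A ⊆ V₁, ∀ B ⊆ V₂, p * N / 2 ≤ #A → p * N / 2 ≤ #B →
      #(G.interedges A B) ≤ p * #A * #B + δ * p * N * #B)
    (hdeg : ∀ v, (1 / 2 + ε) * p * N ≤ (H.neighborSet v).ncard)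
    (u : V) [DecidablePred (H.Reachable u)] :
    N / 2 < #(V₁.filter (H.Reachable u)) := by
  set X := V₁.filter (H.Reachable u)
  set Y := V₂.filter (H.Reachable u)
  have hH := hG.mono hHG
  have hd : 0 < (1 / 2 + ε) * p * N := by positivity
  have hd_half : p * N / 2 ≤ (1 / 2 + ε) * p * N := by nlinarith [mul_pos hp hN]
  have hdegX : ∀ y ∈ Y, (1 / 2 + ε) * p * N ≤ #(X.bipartiteBelow G.Adj y) := fun y hy ↦ by
    rw [mem_filter] at hy
    exact (hdeg y).trans <| mod_cast ncard_neighborSet_le_card_bipartiteBelow hHG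
      (hH.neighborSet_subset_filter_reachable hy.1 hy.2)
  have hdegY : ∀ x ∈ X, (1 / 2 + ε) * p * N ≤ #(Y.bipartiteBelow G.Adj x) := fun x hx ↦ by
    rw [mem_filter] at hx
    exact (hdeg x).trans <| mod_cast ncard_neighborSet_le_card_bipartiteBelow hHG
      (hH.symm.neighborSet_subset_filter_reachable hx.1 hx.2)
  obtain ⟨v, huv⟩ :=
    Set.nonempty_of_ncard_ne_zero (by exact_mod_cast ((hdeg u).trans_lt' hd).ne')
  obtain ⟨⟨x, hx, hux⟩, ⟨y, hy, huy⟩⟩ := hH.exists_reachable_of_adj huv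
  have hyY : y ∈ Y := mem_filter.mpr ⟨hy, huy⟩
  have hxX : x ∈ X := mem_filter.mpr ⟨hx, hux⟩
  have hXcard : (1 / 2 + ε) * p * N ≤ #X := (hdegX y hyY).trans (mod_cast card_filter_le _ _)
  have hYcard : (1 / 2 + ε) * p * N ≤ #Y := (hdegY x hxX).trans (mod_cast card_filter_le _ _)
  have hedges : (1 / 2 + ε) * p * N ≤ p * #X + δ * p * N := by
    refine Rel.le_of_card_interedges_le_mul ⟨y, hyY⟩ hdegX ?_
    calc (#(G.interedges X Y) : ℝ) ≤ p * #X * #Y + δ * p * N * #Y :=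
          hreg X (filter_subset _ _) Y (filter_subset _ _) (hd_half.trans hXcard)
            (hd_half.trans hYcard)
      _ = (p * #X + δ * p * N) * #Y := by ring
  have hXN : (1 / 2 + ε) * N ≤ #X + δ * N :=
    le_of_mul_le_mul_left (by linarith) hp
  linarith [mul_lt_mul_of_pos_right hδε hN]

end SimpleGraph

theorem min_degree_subgraph_connected_general {V : Type*}
    (G : SimpleGraph V) [DecidableRel G.Adj]
    (V₁ V₂ : Finset V) (n : ℕ) (hn : 0 < n)
    (hdisj : Disjoint V₁ V₂)
    (hV₁ : V₁.card = n)
    (hbip : ∀ x y, G.Adj x y → (x ∈ V₁ ∧ y ∈ V₂) ∨ (x ∈ V₂ ∧ y ∈ V₁))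
    (p ε δ : ℝ) (hp0 : 0 < p) (hε0 : 0 < ε)
    (hδε : δ ≤ ε / 4)
    (hreg : ∀ A ⊆ V₁, ∀ B ⊆ V₂,
      (p * n / 2 ≤ (A.card : ℝ)) → (p * n / 2 ≤ (B.card : ℝ)) →
      ((((A ×ˢ B).filter (fun q => G.Adj q.1 q.2)).card : ℝ) ≤
          p * A.card * B.card + δ * p * n * A.card ∧
        (((A ×ˢ B).filter (fun q => G.Adj q.1 q.2)).card : ℝ) ≤
          p * A.card * B.card + δ * p * n * B.card)) :
    ∀ H : SimpleGraph V, H ≤ G →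
      (∀ v : V, (1 / 2 + ε) * p * n ≤ ((H.neighborSet v).ncard : ℝ)) →
      H.Connected := by
  intro H hHG hdeg
  classical
  have hG : G.IsBipartiteWith V₁ V₂ := ⟨disjoint_coe.mpr hdisj, fun x y ↦ hbip x y⟩
  have hhalf (u : V) : (n : ℝ) / 2 < #(V₁.filter (H.Reachable u)) :=
    half_lt_card_filter_reachable hHG hG (by positivity) hp0 hε0 (by linarith)
      (fun A hA B hB hAc hBc ↦ (hreg A hA B hB hAc hBc).2) hdeg u
  have : Nonempty V := (card_pos.mp (hV₁ ▸ hn)).to_subtype.map Subtype.val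
  refine ⟨fun u v ↦ ?_⟩
  have hlt : (n : ℝ) < #(V₁.filter (H.Reachable u)) + #(V₁.filter (H.Reachable v)) := by
    linarith [hhalf u, hhalf v]
  obtain ⟨w, hw⟩ := inter_nonempty_of_card_lt_card_add_card
    (filter_subset (H.Reachable u) V₁) (filter_subset (H.Reachable v) V₁)
    (by rw [hV₁]; exact_mod_cast hlt)
  rw [mem_inter, mem_filter, mem_filter] at hw
  exact hw.1.2.trans hw.2.2.symm

/-- If a bipartite graph `G` with parts of size `n` satisfies the upper-regularity
condition `e(A,B) ≤ p|A||B| + δpn·min(|A|,|B|)`-style bounds for all large sets `A, B`,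
with `δ ≤ ε/4`, then every spanning subgraph `H ⊆ G` of minimum degree at least
`(1/2 + ε)pn` is connected. -/
theorem min_degree_subgraph_connected {V : Type*} [Fintype V] [DecidableEq V]
    (G : SimpleGraph V) [DecidableRel G.Adj]
    (V₁ V₂ : Finset V) (n : ℕ) (hn : 0 < n)
    (hpart : V₁ ∪ V₂ = Finset.univ) (hdisj : Disjoint V₁ V₂)
    (hV₁ : V₁.card = n) (hV₂ : V₂.card = n)
    (hbip : ∀ x y, G.Adj x y → (x ∈ V₁ ∧ y ∈ V₂) ∨ (x ∈ V₂ ∧ y ∈ V₁))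
    (p ε δ : ℝ) (hp0 : 0 < p) (hp1 : p < 1) (hε0 : 0 < ε) (hε1 : ε < 1)
    (hδ0 : 0 < δ) (hδε : δ ≤ ε / 4)
    (hreg : ∀ A ⊆ V₁, ∀ B ⊆ V₂,
      (p * n / 2 ≤ (A.card : ℝ)) → (p * n / 2 ≤ (B.card : ℝ)) →
      ((((A ×ˢ B).filter (fun q => G.Adj q.1 q.2)).card : ℝ) ≤
          p * A.card * B.card + δ * p * n * A.card ∧
        (((A ×ˢ B).filter (fun q => G.Adj q.1 q.2)).card : ℝ) ≤
          p * A.card * B.card + δ * p * n * B.card)) :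
    ∀ H : SimpleGraph V, H ≤ G →
      (∀ v : V, (1 / 2 + ε) * p * n ≤ ((H.neighborSet v).ncard : ℝ)) →
      H.Connected :=
  min_degree_subgraph_connected_general G V₁ V₂ n hn hdisj hV₁ hbip p ε δ hp0 hε0 hδε hreg
end

section
/- Let G be a bipartite graph with parts V₁, V₂ of size n and minimum degree δ(G) ≥ (13/16 + δ)n for some δ > 0. Given a 2-colouring of G with colours red and blue, let V_B be the set of vertices with at least (9/16 + 3δ/4)n blue neighbours. If V_B = ∅, then the red subgraph G_R has minimum degree greater than n/4, and V(G) can be covered by at most 3 red components. -/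
/-!
Since no vertex has `(9/16 + 3δ/4)n` blue neighbours while every vertex has degree at least
`(13/16 + δ)n`, every red degree exceeds `n/4`. Every red component contains a vertex `u` of `V₂`
(an endpoint of any red edge in it), and the more than `n/4` red neighbours of `u` all lie in
`V₁` and in the component of `u`. So each red component meets `V₁` in more than `n/4` vertices,
and as these intersections partition `V₁` there are at most three red components.
-/

open Finset SimpleGraph

namespace Finset

lemma card_filter_eq_zero_add_card_filter_eq_one {α : Type*} (s : Finset α) (f : α → Fin 2) :
    #{a ∈ s | f a = 0} + #{a ∈ s | f a = 1} = #s := by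
  rw [← card_filter_add_card_filter_not (s := s) (p := fun a ↦ f a = 0)]
  congr 2
  exact filter_congr fun a _ ↦ ⟨fun h ↦ by simp [h], Fin.eq_one_of_ne_zero _⟩

lemma div_four_lt_card_filter_eq_zero {α : Type*} {s : Finset α} (f : α → Fin 2) {n : ℕ} {δ : ℝ}
    (hδ : 0 ≤ δ) (hs : (13 / 16 + δ) * n ≤ #s)
    (hblue : (#{a ∈ s | f a = 1} : ℝ) < (9 / 16 + 3 * δ / 4) * n) :
    (n : ℝ) / 4 < #{a ∈ s | f a = 0} := by
  have hsplit : (#{a ∈ s | f a = 0} : ℝ) + #{a ∈ s | f a = 1} = #s := by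
    exact_mod_cast card_filter_eq_zero_add_card_filter_eq_one s f
  linarith [mul_nonneg hδ (Nat.cast_nonneg (α := ℝ) n)]

lemma card_lt_of_forall_lt_mul_card_fiber {α β : Type*} [Fintype β] [Nonempty β]
    [DecidableEq β] (f : α → β) (s : Finset α) {k : ℕ} (h : ∀ b, #s < k * #{a ∈ s | f a = b}) :
    Fintype.card β < k := by
  refine Nat.lt_of_mul_lt_mul_right (a := #s) ?_
  calc Fintype.card β * #s = ∑ _b : β, #s := by simp
    _ < ∑ b : β, k * #{a ∈ s | f a = b} := sum_lt_sum_of_nonempty univ_nonempty fun b _ ↦ h b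
    _ = k * #s := by rw [← mul_sum, card_eq_sum_card_fiberwise fun a _ ↦ mem_univ (f a)]

end Finset

namespace SimpleGraph

variable {V W : Type*}

lemma Subgraph.Connected.map_hom {G : SimpleGraph V} {G' : SimpleGraph W} (f : G →g G')
    {H : G.Subgraph} (hH : H.Connected) : (H.map f).Connected := by
  refine Subgraph.connected_iff.mpr ⟨?_, hH.nonempty.image f⟩
  let ψ : H.coe →g (H.map f).coe :=
    { toFun w := ⟨f w, Set.mem_image_of_mem f w.prop⟩
      map_rel' hw := Relation.map_apply.mpr ⟨_, _, hw, rfl, rfl⟩ }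
  rw [Subgraph.preconnected_iff]
  rintro ⟨_, u, hu, rfl⟩ ⟨_, v, hv, rfl⟩
  exact (hH.preconnected.coe ⟨u, hu⟩ ⟨v, hv⟩).map ψ

lemma exists_connected_cover_of_card_connectedComponent_le {G R : SimpleGraph V} (hRG : R ≤ G)
    [Nonempty V] [Fintype R.ConnectedComponent] {k : ℕ}
    (hk : Fintype.card R.ConnectedComponent ≤ k) :
    ∃ H : Fin k → G.Subgraph, (∀ i, (H i).Connected) ∧ (∀ i, (H i).edgeSet ⊆ R.edgeSet) ∧
      ∀ v, ∃ i, v ∈ (H i).verts := by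
  obtain ⟨g⟩ : Nonempty (R.ConnectedComponent ↪ Fin k) :=
    Function.Embedding.nonempty_of_card_le (by rwa [Fintype.card_fin])
  set φ : Fin k → R.ConnectedComponent := Function.invFun g
  refine ⟨fun i ↦ (φ i).toSubgraph.map (Hom.ofLE hRG),
    fun i ↦ (φ i).connected_toSubgraph.map_hom _, fun i ↦ ?_, fun v ↦ ?_⟩
  · simpa [Subgraph.edgeSet_map] using (φ i).toSubgraph.edgeSet_subset
  · obtain ⟨i, hi⟩ := Function.invFun_surjective g.injective (R.connectedComponentMk v)
    exact ⟨i, by simp [φ, hi]⟩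

lemma exists_degree_le_card_filter_connectedComponentMk_eq {R : SimpleGraph V} [R.LocallyFinite]
    [DecidableEq R.ConnectedComponent] {V₁ V₂ : Finset V}
    (hbip : ∀ x y, R.Adj x y → (x ∈ V₁ ∧ y ∈ V₂) ∨ (x ∈ V₂ ∧ y ∈ V₁)) (hdisj : Disjoint V₁ V₂)
    {v : V} (hv : 0 < R.degree v) :
    ∃ u, R.degree u ≤ #{x ∈ V₁ | R.connectedComponentMk x = R.connectedComponentMk v} := by
  obtain ⟨w, hvw⟩ := R.degree_pos_iff_exists_adj v |>.mp hv
  obtain ⟨u, hu₂, hvu⟩ : ∃ u ∈ V₂, R.Reachable v u := by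
    rcases hbip v w hvw with ⟨-, hw₂⟩ | ⟨hv₂, -⟩
    exacts [⟨w, hw₂, hvw.reachable⟩, ⟨v, hv₂, .refl v⟩]
  refine ⟨u, R.card_neighborFinset_eq_degree u ▸ card_le_card fun x hx ↦ ?_⟩
  rw [mem_neighborFinset] at hx
  have hx₁ : x ∈ V₁ := by
    rcases hbip u x hx with ⟨hu₁, -⟩ | ⟨-, hx₁⟩
    exacts [absurd hu₂ (Finset.disjoint_left.mp hdisj hu₁), hx₁]
  exact mem_filter.mpr ⟨hx₁, ConnectedComponent.sound (hvu.trans hx.reachable).symm⟩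

/-- The red graph `G_R` of a colouring `c` of the edges of `G`, red being colour `0`. -/
def redGraph (G : SimpleGraph V) (c : Sym2 V → Fin 2) : SimpleGraph V :=
  G.deleteEdges {e | c e ≠ 0}

variable {G : SimpleGraph V} {c : Sym2 V → Fin 2}

@[simp]
lemma redGraph_adj {v w : V} : (redGraph G c).Adj v w ↔ G.Adj v w ∧ c s(v, w) = 0 := by
  simp [redGraph]

lemma redGraph_le : redGraph G c ≤ G :=
  deleteEdges_le _

lemma eq_zero_of_mem_edgeSet_redGraph {e : Sym2 V} (he : e ∈ (redGraph G c).edgeSet) : c e = 0 :=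
  of_not_not (edgeSet_deleteEdges _ ▸ he).2

instance [DecidableRel G.Adj] : DecidableRel (redGraph G c).Adj :=
  fun _ _ ↦ decidable_of_iff' _ redGraph_adj

lemma neighborFinset_redGraph [Fintype V] [DecidableRel G.Adj] (v : V) :
    (redGraph G c).neighborFinset v = {w ∈ G.neighborFinset v | c s(v, w) = 0} := by
  ext; simp

end SimpleGraph

theorem empty_VB_red_cover_general {V : Type*} [Fintype V] [DecidableEq V]
    (G : SimpleGraph V) [DecidableRel G.Adj]
    (V₁ V₂ : Finset V) (n : ℕ) (hn : 0 < n) (δ : ℝ) (hδ : 0 < δ)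
    (hdisj : Disjoint V₁ V₂)
    (hV₁ : V₁.card = n)
    (hbip : ∀ x y, G.Adj x y → (x ∈ V₁ ∧ y ∈ V₂) ∨ (x ∈ V₂ ∧ y ∈ V₁))
    (hmin : ∀ v : V, (13 / 16 + δ) * n ≤ (G.degree v : ℝ))
    (c : Sym2 V → Fin 2)
    (hVB : ∀ v : V,
      ((((G.neighborFinset v).filter (fun w => c s(v, w) = 1)).card : ℝ) <
        (9 / 16 + 3 * δ / 4) * n)) :
    (∀ v : V, (n : ℝ) / 4 <
        (((G.neighborFinset v).filter (fun w => c s(v, w) = 0)).card : ℝ)) ∧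
    ∃ H : Fin 3 → G.Subgraph,
      (∀ i, (H i).Connected) ∧
      (∀ i, ∀ e ∈ (H i).edgeSet, c e = 0) ∧
      ∀ v, ∃ i, v ∈ (H i).verts := by
  classical
  have hred (v : V) : (n : ℝ) / 4 < #{w ∈ G.neighborFinset v | c s(v, w) = 0} :=
    div_four_lt_card_filter_eq_zero _ hδ.le (G.card_neighborFinset_eq_degree v ▸ hmin v) (hVB v)
  refine ⟨hred, ?_⟩
  have hdegR (v : V) : n < 4 * (redGraph G c).degree v := by
    rw [← card_neighborFinset_eq_degree, neighborFinset_redGraph]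
    have : (n : ℝ) < 4 * #{w ∈ G.neighborFinset v | c s(v, w) = 0} := by linarith [hred v]
    exact_mod_cast this
  obtain ⟨v₀, -⟩ := card_pos.mp (hV₁ ▸ hn)
  have : Nonempty V := ⟨v₀⟩
  have hcard : Fintype.card (redGraph G c).ConnectedComponent < 4 := by
    refine card_lt_of_forall_lt_mul_card_fiber (redGraph G c).connectedComponentMk V₁
      fun C ↦ C.ind fun v ↦ ?_
    have hv : 0 < (redGraph G c).degree v := by have := hdegR v; omega
    obtain ⟨u, hu⟩ := exists_degree_le_card_filter_connectedComponentMk_eq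
      (fun x y h ↦ hbip x y (redGraph_adj.mp h).1) hdisj hv
    have := hdegR u
    omega
  obtain ⟨H, hconn, hsub, hcover⟩ :=
    exists_connected_cover_of_card_connectedComponent_le (redGraph_le (G := G) (c := c)) (k := 3)
      (by omega)
  exact ⟨H, hconn, fun i _ he ↦ eq_zero_of_mem_edgeSet_redGraph (hsub i he), hcover⟩

/-- If `G` is bipartite with parts of size `n`, minimum degree at least `(13/16 + δ)n`,
and in a given 2-colouring (`0` = red, `1` = blue) no vertex has at least
`(9/16 + 3δ/4)n` blue neighbours (i.e. `V_B = ∅`), then every vertex has red degree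
greater than `n/4`, and `V(G)` can be covered by at most three red components. -/
theorem empty_VB_red_cover {V : Type*} [Fintype V] [DecidableEq V]
    (G : SimpleGraph V) [DecidableRel G.Adj]
    (V₁ V₂ : Finset V) (n : ℕ) (hn : 0 < n) (δ : ℝ) (hδ : 0 < δ)
    (hpart : V₁ ∪ V₂ = Finset.univ) (hdisj : Disjoint V₁ V₂)
    (hV₁ : V₁.card = n) (hV₂ : V₂.card = n)
    (hbip : ∀ x y, G.Adj x y → (x ∈ V₁ ∧ y ∈ V₂) ∨ (x ∈ V₂ ∧ y ∈ V₁))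
    (hmin : ∀ v : V, (13 / 16 + δ) * n ≤ (G.degree v : ℝ))
    (c : Sym2 V → Fin 2)
    (hVB : ∀ v : V,
      ((((G.neighborFinset v).filter (fun w => c s(v, w) = 1)).card : ℝ) <
        (9 / 16 + 3 * δ / 4) * n)) :
    (∀ v : V, (n : ℝ) / 4 <
        (((G.neighborFinset v).filter (fun w => c s(v, w) = 0)).card : ℝ)) ∧
    ∃ H : Fin 3 → G.Subgraph,
      (∀ i, (H i).Connected) ∧
      (∀ i, ∀ e ∈ (H i).edgeSet, c e = 0) ∧
      ∀ v, ∃ i, v ∈ (H i).verts :=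
  empty_VB_red_cover_general G V₁ V₂ n hn δ hδ hdisj hV₁ hbip hmin c hVB
end
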